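/- arXiv:2010.04763 — 8 statements merged into one kernel-verified Lean document; each statement's English description precedes it below -/
import Mathlib

section
/- For every real q ≥ 1 and every natural number n, Γ(n/q + 1) ≤ (n!)^(1/q). -/
theorem gamma_div_le_factorial_rpow (q : ℝ) (hq : 1 ≤ q) (n : ℕ) :
    Real.Gamma ((n : ℝ) / q + 1) ≤ (Nat.factorial n : ℝ) ^ ((1 : ℝ) / q) := by
  have hq0 : 0 < q := lt_of_lt_of_le one_pos hq
  set a : ℝ := 1 / q with ha
  have ha0 : 0 < a := by positivity
  have ha1 : a ≤ 1 := by
    rw [ha, div_le_one hq0]; exact hq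
  have hb0 : 0 ≤ 1 - a := by linarith
  have hmem1 : (1 : ℝ) ∈ Set.Ioi (0 : ℝ) := by norm_num
  have hmem2 : ((n : ℝ) + 1) ∈ Set.Ioi (0 : ℝ) := Set.mem_Ioi.2 (by positivity)
  have hconv := Real.convexOn_log_Gamma.2 hmem1 hmem2 hb0 ha0.le (by ring)
  have hpt : (1 - a) • (1 : ℝ) + a • ((n : ℝ) + 1) = (n : ℝ) / q + 1 := by
    simp [ha, smul_eq_mul]; ring
  rw [hpt] at hconv
  simp only [Function.comp_apply, Real.Gamma_one, Real.log_one, mul_zero, zero_add,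
    smul_eq_mul] at hconv
  have hGn : Real.Gamma ((n : ℝ) + 1) = (Nat.factorial n : ℝ) :=
    Real.Gamma_nat_eq_factorial n
  rw [hGn] at hconv
  have hx : (0 : ℝ) < (n : ℝ) / q + 1 := by positivity
  have hGpos : 0 < Real.Gamma ((n : ℝ) / q + 1) := Real.Gamma_pos_of_pos hx
  have hfpos : (0 : ℝ) < (Nat.factorial n : ℝ) := by exact_mod_cast n.factorial_pos
  rw [Real.rpow_def_of_pos hfpos]
  calc Real.Gamma ((n : ℝ) / q + 1)
      = Real.exp (Real.log (Real.Gamma ((n : ℝ) / q + 1))) := (Real.exp_log hGpos).symm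
    _ ≤ Real.exp (Real.log (Nat.factorial n : ℝ) * a) := Real.exp_le_exp.2 (by
        calc Real.log (Real.Gamma ((n : ℝ) / q + 1)) ≤ a * Real.log (Nat.factorial n : ℝ) :=
          hconv
        _ = Real.log (Nat.factorial n : ℝ) * a := mul_comm _ _)
    _ = Real.exp (Real.log (Nat.factorial n : ℝ) * (1 / q)) := by rw [ha]
end

section
/- Let p ≥ 1 with conjugate exponent q (1/p + 1/q = 1, with 1/q = 0 when p = 1), and let b > 0. Then there exists ε₀ > 0 such that for all 0 < ε < ε₀ the series ∑_{m=0}^∞ (2εb)^m · m! / (Γ(m/p + 1/2) · Γ(m/q + 1)) converges. -/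
/-!
Integrating `exp (-t) * t ^ (x - 1)` over `[x, x + 1]` gives the crude Stirling bound
`log Γ(x) ≥ (x - 1) log c - (x + 1)` for `0 ≤ c ≤ x`. Applied to `Γ(m/p + 1/2)` and
`Γ(m/q + 1)` and combined with `m! ≤ m ^ m`, the `m log m` terms cancel, leaving
`m! / (Γ(m/p + 1/2) Γ(m/q + 1)) ≤ e^{7/2} K ^ m` with `K = exp (H(1/p) + 3/2)`, where `H` is
the binary entropy (so `exp H(1/p) = p^{1/p} q^{1/q}`). The series is then dominated by a
geometric series as soon as `2εbK < 1`.
-/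

open Real MeasureTheory Set Filter
open scoped Nat

namespace Real

theorem rpow_mul_exp_le_Gamma {c x : ℝ} (hc : 0 ≤ c) (hcx : c ≤ x) (hx : 1 ≤ x) :
    c ^ (x - 1) * exp (-(x + 1)) ≤ Gamma x := by
  have hx₀ : 0 < x := by linarith
  have hint : IntegrableOn (fun t ↦ exp (-t) * t ^ (x - 1)) (Ioi 0) :=
    GammaIntegral_convergent hx₀
  have hsub : Ioc x (x + 1) ⊆ Ioi 0 := fun t ht ↦ hx₀.trans ht.1
  calc c ^ (x - 1) * exp (-(x + 1)) = ∫ _ in Ioc x (x + 1), c ^ (x - 1) * exp (-(x + 1)) := by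
        simp [volume_real_Ioc]
    _ ≤ ∫ t in Ioc x (x + 1), exp (-t) * t ^ (x - 1) := by
        refine setIntegral_mono_on (integrableOn_const measure_Ioc_lt_top.ne)
          (hint.mono_set hsub) measurableSet_Ioc fun t ht ↦ ?_
        rw [mul_comm]
        gcongr <;> linarith [ht.1, ht.2]
    _ ≤ ∫ t in Ioi 0, exp (-t) * t ^ (x - 1) := by
        refine setIntegral_mono_set hint ?_ hsub.eventuallyLE
        filter_upwards [ae_restrict_mem measurableSet_Ioi] with t (ht : 0 < t)
        positivity
    _ = Gamma x := (Gamma_eq_integral hx₀).symm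

theorem mul_log_sub_le_log_Gamma {c x : ℝ} (hc : 0 ≤ c) (hcx : c ≤ x) (hx : 1 ≤ x) :
    (x - 1) * log c - (x + 1) ≤ log (Gamma x) := by
  rcases hc.eq_or_lt with rfl | hc₀
  · -- `log 0 = 0`, so this is the case `c = 1`
    have h := log_le_log (exp_pos _) (by simpa using rpow_mul_exp_le_Gamma zero_le_one hx hx)
    simpa using h
  · have h := log_le_log (by positivity) (rpow_mul_exp_le_Gamma hc hcx hx)
    rwa [log_mul (by positivity) (by positivity), log_rpow hc₀, log_exp, ← sub_eq_add_neg] at h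

end Real

theorem factorial_div_Gamma_mul_Gamma_le {s : ℝ} (hs : s ≤ 1) {m : ℕ} (hm : 1 / 2 ≤ m * s) :
    m ! / (Gamma (m * s + 1 / 2) * Gamma (m * (1 - s) + 1)) ≤
      exp (7 / 2) * exp (binEntropy s + 3 / 2) ^ m := by
  set a : ℝ := m * s
  set c : ℝ := m * (1 - s)
  have hc : 0 ≤ c := by have := sub_nonneg.2 hs; positivity
  have hΓa := mul_log_sub_le_log_Gamma (by positivity) (le_add_of_nonneg_right one_half_pos.le)
    (by linarith : 1 ≤ a + 1 / 2)
  have hΓc := mul_log_sub_le_log_Gamma hc (le_add_of_nonneg_right zero_le_one)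
    (by linarith : 1 ≤ c + 1)
  have hfact : log (m ! : ℝ) ≤ m * log m := by
    have h : (m ! : ℝ) ≤ (m : ℝ) ^ m := by exact_mod_cast m.factorial_le_pow
    simpa using log_le_log (by positivity) h
  have hentropy : a * log a + c * log c = m * log m - m * binEntropy s := by
    have := congrArg₂ (· + ·) (negMulLog_mul (m : ℝ) s) (negMulLog_mul (m : ℝ) (1 - s))
    simp only [binEntropy_eq_negMulLog_add_negMulLog_one_sub, negMulLog] at this ⊢
    linear_combination -this
  have hlog_a : log a ≤ m :=
    (log_le_self (by linarith)).trans (mul_le_of_le_one_right m.cast_nonneg hs)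
  rw [← exp_nat_mul, ← exp_add, ← log_le_iff_le_exp (by positivity),
    log_div (by positivity) (by positivity), log_mul (by positivity) (by positivity)]
  linarith

theorem summable_pow_mul_of_eventually_le {a : ℕ → ℝ} {C K x : ℝ} (hK : 0 ≤ K)
    (hx : |x| * K < 1) (ha : ∀ᶠ m in atTop, ‖a m‖ ≤ C * K ^ m) :
    Summable fun m ↦ x ^ m * a m := by
  refine ((summable_geometric_of_lt_one (by positivity) hx).mul_left C)
    |>.of_norm_bounded_eventually_nat ?_
  filter_upwards [ha] with m hm
  rw [norm_mul, norm_pow, Real.norm_eq_abs, mul_pow, mul_left_comm]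
  exact mul_le_mul_of_nonneg_left hm (by positivity)

/-- Convergence of the auxiliary series `β(p,q,b,ε)` for `ε` small enough. -/
theorem beta_series_summable (p q b : ℝ) (hp : 1 ≤ p) (hpq : 1 / p + 1 / q = 1)
    (hb : 0 < b) :
    ∃ ε₀ > 0, ∀ ε : ℝ, 0 < ε → ε < ε₀ →
      Summable (fun m : ℕ =>
        (2 * ε * b) ^ m * (Nat.factorial m : ℝ) /
          (Real.Gamma ((m : ℝ) / p + 1 / 2) * Real.Gamma ((m : ℝ) / q + 1))) := by
  have hs₀ : 0 < 1 / p := by positivity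
  have hs₁ : 1 / p ≤ 1 := div_le_one_of_le₀ hp (by positivity)
  have hq : 1 / q = 1 - 1 / p := by linarith
  set K := exp (binEntropy (1 / p) + 3 / 2)
  have hbound : ∀ᶠ m : ℕ in atTop,
      ‖(m ! : ℝ) / (Gamma (m / p + 1 / 2) * Gamma (m / q + 1))‖ ≤ exp (7 / 2) * K ^ m := by
    filter_upwards [(tendsto_natCast_atTop_atTop.atTop_mul_const hs₀).eventually_ge_atTop (1 / 2)]
      with m hm
    rw [div_eq_mul_one_div (m : ℝ) p, div_eq_mul_one_div (m : ℝ) q, hq,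
      Real.norm_of_nonneg (by positivity)]
    exact factorial_div_Gamma_mul_Gamma_le hs₁ hm
  refine ⟨1 / (2 * b * K), by positivity, fun ε hε hεε₀ ↦ ?_⟩
  simp only [mul_div_assoc]
  refine summable_pow_mul_of_eventually_le (by positivity) ?_ hbound
  rw [lt_div_iff₀ (by positivity)] at hεε₀
  rw [abs_of_pos (by positivity)]
  linarith
end

section
/- For p ≥ 1 and conjugate exponent q (1/p + 1/q = 1), there exists a constant C > 0 such that for all natural numbers m, m! / (Γ(m/p + 1/2) · Γ(m/q + 1)) ≤ C · (2 p^(1/p) q^(1/q))^m. -/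
/-!
Write `α = 1/p`, so that `1/q = 1 - α`, and `a = mα + 1/2`, `b = m(1 - α) + 1`. Then `a + b = m + 3/2`,
and Euler's Beta integral turns the quotient into `Γ(m + 1) / (Γ(m + 3/2) B(a, b))`, where
`Γ(m + 1) ≤ 2 Γ(m + 3/2)`. The integrand of `B(a, b)` is `(t^α (1 - t)^(1-α))^m t^(-1/2)`, and on
`[α/2, α]`, near the maximum `t = α` of `t^α (1 - t)^(1-α)`, it is at least
`(α^α (1 - α)^(1 - α) / 2)^m`; integrating over that interval bounds `B(a, b)` from below.
-/

open Real Set intervalIntegral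

theorem Real.Gamma_mul_Gamma_eq_Gamma_add_mul_integral {a b : ℝ} (ha : 0 < a) (hb : 0 < b) :
    Gamma a * Gamma b = Gamma (a + b) * ∫ t in (0 : ℝ)..1, t ^ (a - 1) * (1 - t) ^ (b - 1) := by
  have hbeta : Complex.betaIntegral a b
      = ((∫ t in (0 : ℝ)..1, t ^ (a - 1) * (1 - t) ^ (b - 1) : ℝ) : ℂ) := by
    rw [Complex.betaIntegral, ← integral_ofReal]
    refine integral_congr fun t ht => ?_
    rw [uIcc_of_le zero_le_one] at ht
    rw [Complex.ofReal_mul, Complex.ofReal_cpow ht.1, Complex.ofReal_cpow (sub_nonneg.2 ht.2)]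
    push_cast
    ring
  have h := Complex.Gamma_mul_Gamma_eq_betaIntegral (s := a) (t := b)
    (by simpa using ha) (by simpa using hb)
  rw [hbeta, Complex.Gamma_ofReal, Complex.Gamma_ofReal, ← Complex.ofReal_add,
    Complex.Gamma_ofReal, ← Complex.ofReal_mul, ← Complex.ofReal_mul] at h
  exact_mod_cast h

theorem Real.Gamma_nat_add_one_le_two_mul_Gamma_nat_add_three_halves (m : ℕ) :
    Gamma (m + 1) ≤ 2 * Gamma (m + 3 / 2) := by
  rcases m with _ | m
  · have hΓ : Gamma (3 / 2) = √π / 2 := by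
      rw [show (3 / 2 : ℝ) = 1 / 2 + 1 by norm_num, Gamma_add_one (by norm_num),
        Gamma_one_half_eq]
      ring
    have hπ : 1 ≤ √π := one_le_sqrt.2 (by linarith [pi_gt_three])
    simp only [CharP.cast_eq_zero, zero_add, Gamma_one, hΓ]
    linarith
  · have hmono : Gamma (m + 1 + 1) ≤ Gamma (m + 1 + 3 / 2) :=
      Gamma_strictMonoOn_Ici.monotoneOn (by rw [mem_Ici]; linarith [m.cast_nonneg (α := ℝ)])
        (by rw [mem_Ici]; linarith [m.cast_nonneg (α := ℝ)]) (by linarith)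
    have hpos : 0 < Gamma (m + 1 + 3 / 2) := Gamma_pos_of_pos (by positivity)
    push_cast
    linarith

section BetaLowerBound

variable {α : ℝ}

theorem half_mul_rpow_mul_one_sub_rpow_le (hα₀ : 0 < α) (hα₁ : α ≤ 1) {t : ℝ}
    (ht : t ∈ Icc (α / 2) α) :
    α ^ α * (1 - α) ^ (1 - α) / 2 ≤ t ^ α * (1 - t) ^ (1 - α) := by
  have ht₀ : 0 ≤ t := le_trans (by positivity) ht.1
  have hleft : α ^ α / 2 ≤ t ^ α :=
    calc α ^ α / 2 ≤ α ^ α * (1 / 2) ^ α := by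
          rw [div_eq_mul_one_div]
          gcongr
          simpa using rpow_le_rpow_of_exponent_ge (by norm_num : (0 : ℝ) < 1 / 2)
            (by norm_num) hα₁
      _ = (α / 2) ^ α := by rw [← mul_rpow hα₀.le (by norm_num)]; ring_nf
      _ ≤ t ^ α := by gcongr; exact ht.1
  have hright : (1 - α) ^ (1 - α) ≤ (1 - t) ^ (1 - α) :=
    rpow_le_rpow (by linarith) (by linarith [ht.2]) (by linarith)
  calc α ^ α * (1 - α) ^ (1 - α) / 2 = α ^ α / 2 * (1 - α) ^ (1 - α) := by ring
    _ ≤ t ^ α * (1 - t) ^ (1 - α) := by gcongr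

theorem pow_le_rpow_mul_one_sub_rpow (hα₀ : 0 < α) (hα₁ : α ≤ 1) (m : ℕ) {t : ℝ}
    (ht : t ∈ Icc (α / 2) α) :
    (α ^ α * (1 - α) ^ (1 - α) / 2) ^ m ≤ t ^ (m * α - 1 / 2) * (1 - t) ^ (m * (1 - α)) := by
  have ht₀ : 0 < t := lt_of_lt_of_le (by positivity) ht.1
  have ht₁ : 0 ≤ 1 - t := by linarith [ht.2]
  have hsplit : t ^ (m * α - 1 / 2) * (1 - t) ^ (m * (1 - α))
      = (t ^ α * (1 - t) ^ (1 - α)) ^ m * t ^ (-(1 / 2) : ℝ) := by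
    rw [sub_eq_add_neg, rpow_add ht₀, mul_comm (m : ℝ) α, mul_comm (m : ℝ) (1 - α),
      rpow_mul ht₀.le, rpow_mul ht₁, rpow_natCast, rpow_natCast, mul_pow]
    ring
  have hinv_sqrt : 1 ≤ t ^ (-(1 / 2) : ℝ) :=
    one_le_rpow_of_pos_of_le_one_of_nonpos ht₀ (by linarith [ht.2]) (by norm_num)
  rw [hsplit]
  calc (α ^ α * (1 - α) ^ (1 - α) / 2) ^ m ≤ (t ^ α * (1 - t) ^ (1 - α)) ^ m := by
        gcongr
        exact half_mul_rpow_mul_one_sub_rpow_le hα₀ hα₁ ht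
    _ ≤ (t ^ α * (1 - t) ^ (1 - α)) ^ m * t ^ (-(1 / 2) : ℝ) :=
        le_mul_of_one_le_right (by positivity) hinv_sqrt

theorem le_integral_rpow_mul_one_sub_rpow (hα₀ : 0 < α) (hα₁ : α ≤ 1) (m : ℕ) :
    α / 2 * (α ^ α * (1 - α) ^ (1 - α) / 2) ^ m
      ≤ ∫ t in (0 : ℝ)..1, t ^ (m * α - 1 / 2) * (1 - t) ^ (m * (1 - α)) := by
  set f : ℝ → ℝ := fun t => t ^ (m * α - 1 / 2) * (1 - t) ^ (m * (1 - α))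
  have hf : IntervalIntegrable f MeasureTheory.volume 0 1 :=
    (intervalIntegrable_rpow' (by nlinarith)).mul_continuousOn
      ((continuous_const.sub continuous_id).rpow_const fun _ => Or.inr (by positivity)).continuousOn
  have hf_nonneg : ∀ t ∈ Ioc (0 : ℝ) 1, 0 ≤ f t := fun t ht => by
    have : 0 ≤ t := ht.1.le
    have : 0 ≤ 1 - t := sub_nonneg.2 ht.2
    positivity
  have hsub : Icc (α / 2) α ⊆ uIcc 0 1 := by
    rw [uIcc_of_le zero_le_one]
    exact Icc_subset_Icc (by positivity) hα₁
  calc α / 2 * (α ^ α * (1 - α) ^ (1 - α) / 2) ^ m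
      = ∫ _ in (α / 2)..α, (α ^ α * (1 - α) ^ (1 - α) / 2) ^ m := by
        rw [integral_const, smul_eq_mul]; ring
    _ ≤ ∫ t in (α / 2)..α, f t :=
        integral_mono_on (by linarith) intervalIntegrable_const
          (hf.mono_set (by rwa [uIcc_of_le (by linarith)]))
          fun t ht => pow_le_rpow_mul_one_sub_rpow hα₀ hα₁ m ht
    _ ≤ ∫ t in (0 : ℝ)..1, f t :=
        integral_mono_interval (by positivity) (by linarith) hα₁
          ((MeasureTheory.ae_restrict_mem measurableSet_Ioc).mono hf_nonneg) hf

theorem factorial_div_Gamma_mul_Gamma_le_s7 (hα₀ : 0 < α) (hα₁ : α ≤ 1) (m : ℕ) :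
    (m.factorial : ℝ) / (Gamma (m * α + 1 / 2) * Gamma (m * (1 - α) + 1))
      ≤ 4 / α * (2 / (α ^ α * (1 - α) ^ (1 - α))) ^ m := by
  have h1α : 0 ≤ 1 - α := by linarith
  have hK : 0 < α ^ α * (1 - α) ^ (1 - α) := by
    refine mul_pos (rpow_pos_of_pos hα₀ α) ?_
    rcases h1α.eq_or_lt with h | h
    · rw [← h, rpow_zero]; exact one_pos
    · exact rpow_pos_of_pos h _
  have hbeta := Gamma_mul_Gamma_eq_Gamma_add_mul_integral
    (a := m * α + 1 / 2) (b := m * (1 - α) + 1) (by positivity) (by positivity)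
  rw [show (m : ℝ) * α + 1 / 2 + (m * (1 - α) + 1) = m + 3 / 2 by ring,
    show (m : ℝ) * α + 1 / 2 - 1 = m * α - 1 / 2 by ring, add_sub_cancel_right] at hbeta
  have hI := le_integral_rpow_mul_one_sub_rpow hα₀ hα₁ m
  have hΓ : 0 < Gamma (m + 3 / 2) := Gamma_pos_of_pos (by positivity)
  rw [← Gamma_nat_eq_factorial, hbeta]
  calc Gamma (m + 1) / (Gamma (m + 3 / 2) *
        ∫ t in (0 : ℝ)..1, t ^ (m * α - 1 / 2) * (1 - t) ^ (m * (1 - α)))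
      ≤ 2 * Gamma (m + 3 / 2) /
          (Gamma (m + 3 / 2) * (α / 2 * (α ^ α * (1 - α) ^ (1 - α) / 2) ^ m)) := by
        gcongr
        exact Gamma_nat_add_one_le_two_mul_Gamma_nat_add_three_halves m
    _ = 4 / α * (2 / (α ^ α * (1 - α) ^ (1 - α))) ^ m := by
        rw [div_pow, div_pow]
        field_simp
        ring

end BetaLowerBound

/-- Stirling-type estimate: `m! / (Γ(m/p + 1/2) Γ(m/q + 1)) ≤ C (2 p^(1/p) q^(1/q))^m`. -/
theorem stirling_type_estimate (p q : ℝ) (hp : 1 ≤ p) (hpq : 1 / p + 1 / q = 1) :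
    ∃ C > 0, ∀ m : ℕ,
      (Nat.factorial m : ℝ) /
          (Real.Gamma ((m : ℝ) / p + 1 / 2) * Real.Gamma ((m : ℝ) / q + 1))
        ≤ C * (2 * p ^ ((1 : ℝ) / p) * q ^ ((1 : ℝ) / q)) ^ m := by
  have hp₀ : 0 < p := by linarith
  have hq_inv : 1 / q = 1 - 1 / p := by linarith
  have hq₀ : 0 ≤ q := by
    have : 0 ≤ 1 / q := by rw [hq_inv, sub_nonneg, div_le_one hp₀]; exact hp
    simpa using this
  have hbase : 2 * p ^ ((1 : ℝ) / p) * q ^ ((1 : ℝ) / q)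
      = 2 / ((1 / p) ^ (1 / p) * (1 - 1 / p) ^ (1 - 1 / p)) := by
    rw [← hq_inv, one_div p, one_div q, inv_rpow hp₀.le, inv_rpow hq₀]
    simp only [div_eq_mul_inv, mul_inv, inv_inv, mul_assoc]
  refine ⟨4 / (1 / p), by positivity, fun m => ?_⟩
  rw [hbase, div_eq_mul_one_div (m : ℝ) p, div_eq_mul_one_div (m : ℝ) q, hq_inv]
  exact factorial_div_Gamma_mul_Gamma_le_s7 (α := 1 / p) (by positivity)
    (by rw [div_le_one hp₀]; exact hp) m
end

section
/- For every b > 0 and p ≥ 1 there exist constants C' > 0 and B' > 0 such that for all r ≥ 0, ∑_{k=0}^∞ b^k · r^k / Γ(k/p + 1/2) ≤ C' · exp(B' · r^p). -/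
/-!
Writing `(4br)^k = u^(k/p)` with `u = (4br)^p`, the integral `Γ(t+1) = ∫ e^(-x) x^t` restricted to
`(u, u+1]` gives `u^t ≤ e^(u+1) Γ(t+1)`. Log-convexity of `Γ` gives `Γ(t+1) ≤ √(t+1/2) Γ(t+1/2)`,
and `√(k/p + 1/2) ≤ 2^k` when `p ≥ 1`. Hence the `k`-th term is at most `e^(u+1) 2^(-k)`, and
summing the geometric series gives the bound with `C' = 2e`, `B' = (4b)^p`.
-/

open Real MeasureTheory Set

theorem rpow_le_exp_mul_Gamma_add_one {u t : ℝ} (hu : 0 ≤ u) (ht : 0 ≤ t) :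
    u ^ t ≤ exp (u + 1) * Gamma (t + 1) := by
  have hint : IntegrableOn (fun x : ℝ => exp (-x) * x ^ t) (Ioi 0) := by
    simpa using GammaIntegral_convergent (show 0 < t + 1 by linarith)
  have hsub : Ioc u (u + 1) ⊆ Ioi 0 := fun x hx => hu.trans_lt hx.1
  have hpiece : exp (-(u + 1)) * u ^ t ≤ ∫ x in Ioc u (u + 1), exp (-x) * x ^ t := by
    simpa using setIntegral_ge_of_const_le_real (s := Ioc u (u + 1)) measurableSet_Ioc (by simp)
      (fun x hx => mul_le_mul (exp_le_exp.mpr (neg_le_neg hx.2)) (rpow_le_rpow hu hx.1.le ht)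
        (by positivity) (exp_pos _).le)
      (hint.mono_set hsub)
  have hwhole : ∫ x in Ioc u (u + 1), exp (-x) * x ^ t ≤ Gamma (t + 1) := by
    rw [Gamma_eq_integral (by linarith), add_sub_cancel_right]
    refine setIntegral_mono_set hint ?_ hsub.eventuallyLE
    filter_upwards [ae_restrict_mem measurableSet_Ioi] with x hx
    exact mul_nonneg (exp_pos _).le (rpow_nonneg (le_of_lt hx) t)
  calc u ^ t = exp (u + 1) * (exp (-(u + 1)) * u ^ t) := by
        rw [← mul_assoc, ← exp_add, add_neg_cancel, exp_zero, one_mul]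
    _ ≤ exp (u + 1) * Gamma (t + 1) := by gcongr; exact hpiece.trans hwhole

theorem Gamma_add_half_le_sqrt_mul_Gamma {x : ℝ} (hx : 0 < x) :
    Gamma (x + 1 / 2) ≤ √x * Gamma x := by
  have hG := (Gamma_pos_of_pos hx).le
  calc Gamma (x + 1 / 2) = Gamma (1 / 2 * x + 1 / 2 * (x + 1)) := by ring_nf
    _ ≤ Gamma x ^ (1 / 2 : ℝ) * Gamma (x + 1) ^ (1 / 2 : ℝ) :=
      Gamma_mul_add_mul_le_rpow_Gamma_mul_rpow_Gamma hx (by linarith) (by norm_num)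
        (by norm_num) (by norm_num)
    _ = √x * Gamma x := by
      rw [Gamma_add_one hx.ne', mul_rpow hx.le hG, ← sqrt_eq_rpow, ← sqrt_eq_rpow,
        mul_left_comm, mul_self_sqrt hG]

theorem pow_le_two_pow_mul_exp_mul_Gamma {x p : ℝ} (hx : 0 ≤ x) (hp : 1 ≤ p) (k : ℕ) :
    x ^ k ≤ 2 ^ k * exp (x ^ p + 1) * Gamma (k / p + 1 / 2) := by
  set t : ℝ := k / p
  have ht : 0 ≤ t := by positivity
  have htk : t ≤ k := div_le_self k.cast_nonneg hp
  have hsqrt : √(t + 1 / 2) ≤ 2 ^ k := by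
    have hk : (k : ℝ) + 1 ≤ 2 ^ k := by exact_mod_cast Nat.lt_two_pow_self
    rw [sqrt_le_iff]
    constructor <;> nlinarith
  calc x ^ k = (x ^ p) ^ t := by
        rw [← rpow_natCast, ← rpow_mul hx, mul_div_cancel₀ _ (by positivity)]
    _ ≤ exp (x ^ p + 1) * Gamma (t + 1) := rpow_le_exp_mul_Gamma_add_one (by positivity) ht
    _ = exp (x ^ p + 1) * Gamma (t + 1 / 2 + 1 / 2) := by ring_nf
    _ ≤ exp (x ^ p + 1) * (2 ^ k * Gamma (t + 1 / 2)) := by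
        gcongr
        exact (Gamma_add_half_le_sqrt_mul_Gamma (by positivity)).trans
          (mul_le_mul_of_nonneg_right hsqrt (Gamma_pos_of_pos (by positivity)).le)
    _ = 2 ^ k * exp (x ^ p + 1) * Gamma (t + 1 / 2) := by ring

theorem mul_pow_div_Gamma_le_exp_mul_half_pow {b r p : ℝ} (hb : 0 ≤ b) (hr : 0 ≤ r) (hp : 1 ≤ p)
    (k : ℕ) :
    b ^ k * r ^ k / Gamma (k / p + 1 / 2) ≤ exp ((4 * b) ^ p * r ^ p + 1) * (1 / 2) ^ k := by
  have hΓ : 0 < Gamma (k / p + 1 / 2) := Gamma_pos_of_pos (by positivity)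
  have hpow := pow_le_two_pow_mul_exp_mul_Gamma (x := 4 * b * r) (by positivity) hp k
  rw [mul_rpow (by positivity) hr] at hpow
  calc b ^ k * r ^ k / Gamma (k / p + 1 / 2)
      = (4 * b * r) ^ k / Gamma (k / p + 1 / 2) / 4 ^ k := by
        rw [mul_pow, mul_pow]; field_simp
    _ ≤ 2 ^ k * exp ((4 * b) ^ p * r ^ p + 1) * Gamma (k / p + 1 / 2) / Gamma (k / p + 1 / 2) /
          4 ^ k := by
        gcongr
    _ = exp ((4 * b) ^ p * r ^ p + 1) * (1 / 2) ^ k := by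
        rw [mul_div_cancel_right₀ _ hΓ.ne', mul_comm, mul_div_assoc, ← div_pow]
        norm_num

/-- Growth estimate for the Mittag-Leffler type series `∑ b^k r^k / Γ(k/p + 1/2)`. -/
theorem mittag_leffler_growth (b p : ℝ) (hb : 0 < b) (hp : 1 ≤ p) :
    ∃ C' > 0, ∃ B' > 0, ∀ r : ℝ, 0 ≤ r →
      ∑' k : ℕ, b ^ k * r ^ k / Real.Gamma ((k : ℝ) / p + 1 / 2)
        ≤ C' * Real.exp (B' * r ^ p) := by
  refine ⟨2 * exp 1, by positivity, (4 * b) ^ p, by positivity, fun r hr => ?_⟩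
  have hterm := mul_pow_div_Gamma_le_exp_mul_half_pow hb.le hr hp
  have hgeom : Summable fun k : ℕ => exp ((4 * b) ^ p * r ^ p + 1) * (1 / 2 : ℝ) ^ k :=
    summable_geometric_two.mul_left _
  have hnonneg : ∀ k : ℕ, 0 ≤ b ^ k * r ^ k / Gamma ((k : ℝ) / p + 1 / 2) :=
    fun k => div_nonneg (by positivity) (Gamma_pos_of_pos (by positivity)).le
  calc ∑' k : ℕ, b ^ k * r ^ k / Gamma ((k : ℝ) / p + 1 / 2)
      ≤ ∑' k : ℕ, exp ((4 * b) ^ p * r ^ p + 1) * (1 / 2 : ℝ) ^ k :=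
        Summable.tsum_le_tsum hterm (hgeom.of_nonneg_of_le hnonneg hterm) hgeom
    _ = 2 * exp 1 * exp ((4 * b) ^ p * r ^ p) := by
        rw [tsum_mul_left, tsum_geometric_two, exp_add]; ring
end

section
/- For every multi-index k = (k₁,...,kₙ) ∈ ℕ₀ⁿ and every real q ≥ 1, Γ(|k|/(nq) + 1)^(nq) ≤ k!, where |k| = k₁+...+kₙ and k! = k₁!···kₙ!. -/
/-!
By log-convexity of `Γ` (Bohr–Mollerup), `Γ(∑ wᵢ xᵢ) ≤ ∏ Γ(xᵢ)^wᵢ` for weights summing to one.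
With the two points `m + 1` and `1` and weights `1/q`, `1 - 1/q` this gives `Γ(m/q + 1)^q ≤ m!`;
with the points `kᵢ/q + 1` and equal weights `1/n` it gives
`Γ(|k|/(nq) + 1)^(nq) ≤ ∏ Γ(kᵢ/q + 1)^q ≤ ∏ kᵢ!`.
-/

open Finset

namespace Real

theorem Gamma_sum_mul_le_prod_rpow {ι : Type*} (s : Finset ι) {w x : ι → ℝ}
    (hw : ∀ i ∈ s, 0 ≤ w i) (hw₁ : ∑ i ∈ s, w i = 1) (hx : ∀ i ∈ s, 0 < x i) :
    Gamma (∑ i ∈ s, w i * x i) ≤ ∏ i ∈ s, Gamma (x i) ^ w i := by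
  have hΓ : ∀ i ∈ s, 0 < Gamma (x i) := fun i hi => Gamma_pos_of_pos (hx i hi)
  have hmem : ∑ i ∈ s, w i * x i ∈ Set.Ioi 0 := (convex_Ioi 0).sum_mem hw hw₁ hx
  rw [← log_le_log_iff (Gamma_pos_of_pos hmem)
      (prod_pos fun i hi => rpow_pos_of_pos (hΓ i hi) _),
    log_prod fun i hi => (rpow_pos_of_pos (hΓ i hi) _).ne',
    sum_congr rfl fun i hi => log_rpow (hΓ i hi) (w i)]
  exact convexOn_log_Gamma.map_sum_le hw hw₁ hx

theorem Gamma_div_add_one_rpow_le_factorial (m : ℕ) {q : ℝ} (hq : 1 ≤ q) :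
    Gamma (m / q + 1) ^ q ≤ m.factorial := by
  have hq₀ : 0 < q := zero_lt_one.trans_le hq
  have hΓ : Gamma (m / q + 1) ≤ (m.factorial : ℝ) ^ q⁻¹ := by
    have h := Gamma_sum_mul_le_prod_rpow univ (w := ![q⁻¹, 1 - q⁻¹]) (x := ![(m : ℝ) + 1, 1])
      (by simp [Fin.forall_fin_two, inv_le_one_of_one_le₀ hq, hq₀.le])
      (by simp [Fin.sum_univ_two]) (by simp [Fin.forall_fin_two]; positivity)
    simpa [Fin.sum_univ_two, Fin.prod_univ_two, Gamma_nat_eq_factorial, div_eq_inv_mul,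
      mul_add, add_assoc] using h
  calc Gamma (m / q + 1) ^ q ≤ ((m.factorial : ℝ) ^ q⁻¹) ^ q :=
        rpow_le_rpow (Gamma_pos_of_pos (by positivity)).le hΓ hq₀.le
    _ = m.factorial := rpow_inv_rpow (by positivity) hq₀.ne'

end Real

/-- For a multi-index `k ∈ ℕ₀ⁿ` and `q ≥ 1`: `Γ(|k|/(nq) + 1)^(nq) ≤ k!`. -/
theorem gamma_pow_le_multi_factorial (n : ℕ) (hn : 1 ≤ n) (k : Fin n → ℕ) (q : ℝ)
    (hq : 1 ≤ q) :
    Real.Gamma ((∑ i, k i : ℕ) / ((n : ℝ) * q) + 1) ^ ((n : ℝ) * q)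
      ≤ (∏ i, Nat.factorial (k i) : ℕ) := by
  have hn₀ : (0 : ℝ) < n := by exact_mod_cast hn
  have hq₀ : 0 < q := zero_lt_one.trans_le hq
  have hmean : ∑ i, (n : ℝ)⁻¹ * (k i / q + 1) = (∑ i, k i : ℕ) / ((n : ℝ) * q) + 1 := by
    rw [← mul_sum, sum_add_distrib, ← sum_div, sum_const, card_univ, Fintype.card_fin]
    push_cast
    field_simp
    ring
  have hJensen := Real.Gamma_sum_mul_le_prod_rpow univ (w := fun _ => (n : ℝ)⁻¹)
    (x := fun i => k i / q + 1) (fun _ _ => by positivity) (by simp [hn₀.ne'])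
    (fun _ _ => by positivity)
  rw [hmean] at hJensen
  calc Real.Gamma ((∑ i, k i : ℕ) / ((n : ℝ) * q) + 1) ^ ((n : ℝ) * q)
      ≤ (∏ i, Real.Gamma (k i / q + 1) ^ (n : ℝ)⁻¹) ^ ((n : ℝ) * q) :=
        Real.rpow_le_rpow (Real.Gamma_pos_of_pos (by positivity)).le hJensen (by positivity)
    _ = ∏ i, Real.Gamma (k i / q + 1) ^ q := by
        rw [← Real.finsetProd_rpow _ _ fun i _ => by positivity]
        refine prod_congr rfl fun i _ => ?_
        rw [← Real.rpow_mul (Real.Gamma_pos_of_pos (by positivity)).le,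
          inv_mul_cancel_left₀ hn₀.ne']
    _ ≤ ∏ i, ((k i).factorial : ℝ) :=
        prod_le_prod (fun i _ => by positivity)
          fun i _ => Real.Gamma_div_add_one_rpow_le_factorial (k i) hq
    _ = (∏ i, Nat.factorial (k i) : ℕ) := by push_cast; rfl
end

section
/- For all multi-indices m, k ∈ ℕ₀ⁿ, the quantity c(n,m+k)/(c(n,m)·c(n,k)) ≤ (n-1)! · 2^(n+|m|+|k|-1), where c(n,k) = (n+|k|-1)!/((n-1)!·k!) with k! = k₁!···kₙ! and |k| = k₁+...+kₙ. -/
open Finset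

/-- The constant `c(n,k) = (n+|k|-1)!/((n-1)! k!)` from the Cauchy estimates for
monogenic functions, as a real number. -/
noncomputable def cnk (n : ℕ) (k : Fin n → ℕ) : ℝ :=
  (Nat.factorial (n + (∑ i, k i) - 1) : ℝ) /
    ((Nat.factorial (n - 1) : ℝ) * (∏ i, Nat.factorial (k i) : ℕ))

/-!
For `n ≥ 1`, `N := n + |m| + |k| - 1` is at most `(n + |m| - 1) + (n + |k| - 1)`, so
`N! = C(N, i) i! (N - i)!` with `i ≤ n + |m| - 1`, `N - i ≤ n + |k| - 1` and `C(N, i) ≤ 2 ^ N`.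
On the multi-index side `m! k! ≤ (m + k)!` coordinatewise, since `i! j!` divides `(i + j)!`.
-/

open scoped Nat

theorem Nat.factorial_le_two_pow_mul_factorial_mul_factorial {N p q : ℕ} (h : N ≤ p + q) :
    N ! ≤ 2 ^ N * p ! * q ! := by
  calc N ! = N.choose (min p N) * (min p N)! * (N - min p N)! :=
        (Nat.choose_mul_factorial_mul_factorial (min_le_right p N)).symm
    _ ≤ 2 ^ N * p ! * q ! := by
      gcongr
      · exact Nat.choose_le_two_pow N _
      · exact min_le_left p N
      · omega

theorem Finset.prod_factorial_mul_prod_factorial_le {ι : Type*} (s : Finset ι) (m k : ι → ℕ) :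
    (∏ i ∈ s, (m i)!) * ∏ i ∈ s, (k i)! ≤ ∏ i ∈ s, (m i + k i)! := by
  rw [← prod_mul_distrib]
  exact prod_le_prod' fun i _ ↦
    Nat.le_of_dvd (Nat.factorial_pos _) (Nat.factorial_mul_factorial_dvd_factorial_add _ _)

theorem cnk_add_div_cnk_mul_cnk (n : ℕ) (m k : Fin n → ℕ) :
    cnk n (m + k) / (cnk n m * cnk n k) =
      (n - 1)! * ((((n + ∑ i, m i) + (∑ i, k i) - 1)! *
          ((∏ i, (m i)!) * ∏ i, (k i)!) : ℕ) : ℝ) /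
        (((n + ∑ i, m i) - 1)! * ((n + ∑ i, k i) - 1)! * ∏ i, (m i + k i)! : ℕ) := by
  simp only [cnk, Pi.add_apply, sum_add_distrib, ← add_assoc]
  push_cast
  field_simp

/-- Submultiplicativity-type estimate: `c(n,m+k)/(c(n,m) c(n,k)) ≤ (n-1)! 2^(n+|m|+|k|-1)`. -/
theorem cnk_submultiplicative (n : ℕ) (hn : 1 ≤ n) (m k : Fin n → ℕ) :
    cnk n (m + k) / (cnk n m * cnk n k)
      ≤ (Nat.factorial (n - 1) : ℝ) * 2 ^ (n + (∑ i, m i) + (∑ i, k i) - 1) := by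
  have hfactorial := Nat.factorial_le_two_pow_mul_factorial_mul_factorial
    (N := n + (∑ i, m i) + (∑ i, k i) - 1) (p := n + (∑ i, m i) - 1) (q := n + (∑ i, k i) - 1)
    (by omega)
  have hmulti := prod_factorial_mul_prod_factorial_le univ m k
  rw [cnk_add_div_cnk_mul_cnk, div_le_iff₀ (by positivity), mul_assoc (_ : ℝ)]
  refine mul_le_mul_of_nonneg_left ?_ (Nat.cast_nonneg _)
  norm_cast
  calc _ ≤ _ := Nat.mul_le_mul hfactorial hmulti
    _ = _ := by ring
end

section
/- Let p ≥ 1 with conjugate exponent q. Suppose sequences (α_k)_{k∈ℕ} ⊂ ℝ and (u_m coefficients) satisfy |α_{m+k}| ≤ C_f b^{m+k}/Γ((m+k)/p + 1) for constants C_f, b > 0. Then for all x ≥ 0 and all sufficiently small ε > 0, the double series ∑_{m=0}^∞ ∑_{k=0}^∞ (ε^m/(m!)^{1/q}) · |α_{m+k}| · ((k+m)!/k!) · x^k converges and is bounded by C · exp(B'' x^p) for some constants C, B'' > 0 depending only on p, q, b, ε, C_f. -/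
open Real MeasureTheory Set

private lemma aux_gamma_lb (x : ℝ) (hx : 0 ≤ x) :
    x ^ x * Real.exp (-x) ≤ Real.Gamma (x + 1) := by
  have hx1 : (0:ℝ) < x + 1 := by linarith
  rw [Real.Gamma_eq_integral hx1]
  have hint : IntegrableOn (fun t => Real.exp (-t) * t ^ (x + 1 - 1)) (Ioi 0) :=
    Real.GammaIntegral_convergent hx1
  simp only [add_sub_cancel_right] at hint ⊢
  have hsub : Ioi x ⊆ Ioi 0 := Ioi_subset_Ioi hx
  have hnn : 0 ≤ᵐ[volume.restrict (Ioi (0:ℝ))] fun t => Real.exp (-t) * t ^ x := by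
    filter_upwards [ae_restrict_mem measurableSet_Ioi] with t ht
    exact mul_nonneg (Real.exp_pos _).le (Real.rpow_nonneg (le_of_lt ht) _)
  have h2 : (∫ t in Ioi x, Real.exp (-t) * t ^ x) ≤ ∫ t in Ioi 0, Real.exp (-t) * t ^ x :=
    setIntegral_mono_set hint hnn (HasSubset.Subset.eventuallyLE hsub)
  have hexp : IntegrableOn (fun t => Real.exp (-t)) (Ioi x) := by
    simpa using exp_neg_integrableOn_Ioi x (b := 1) one_pos
  have h1 : (∫ t in Ioi x, Real.exp (-t) * x ^ x) ≤ ∫ t in Ioi x, Real.exp (-t) * t ^ x := by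
    refine setIntegral_mono_on (hexp.mul_const _) (hint.mono_set hsub) measurableSet_Ioi ?_
    intro t ht
    exact mul_le_mul_of_nonneg_left (Real.rpow_le_rpow hx (le_of_lt ht) hx) (Real.exp_pos _).le
  have h0 : (∫ t in Ioi x, Real.exp (-t) * x ^ x) = Real.exp (-x) * x ^ x := by
    rw [MeasureTheory.integral_mul_const, integral_exp_neg_Ioi]
  linarith [h1, h2, h0.symm.le]

private lemma aux_fact_le_gamma (p : ℝ) (hp : 1 ≤ p) (j : ℕ) :
    ((j.factorial : ℝ)) ^ ((1:ℝ)/p) ≤ (p * Real.exp 1) ^ j * Real.Gamma ((j : ℝ) / p + 1) := by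
  have hp0 : (0:ℝ) < p := lt_of_lt_of_le one_pos hp
  have hy : (0:ℝ) ≤ (j:ℝ)/p := div_nonneg (Nat.cast_nonneg _) hp0.le
  have hpe : (1:ℝ) ≤ p * Real.exp 1 := by
    nlinarith [Real.add_one_le_exp (1:ℝ), Real.exp_pos (1:ℝ)]
  have h1 : ((j.factorial : ℝ)) ^ ((1:ℝ)/p) ≤ (j:ℝ) ^ ((j:ℝ)/p) := by
    have : ((j.factorial : ℝ)) ≤ (j:ℝ) ^ (j:ℝ) := by
      rw [Real.rpow_natCast]
      exact_mod_cast Nat.factorial_le_pow j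
    calc ((j.factorial : ℝ)) ^ ((1:ℝ)/p) ≤ ((j:ℝ) ^ (j:ℝ)) ^ ((1:ℝ)/p) :=
          Real.rpow_le_rpow (Nat.cast_nonneg _) this (by positivity)
      _ = (j:ℝ) ^ ((j:ℝ)/p) := by
          rw [← Real.rpow_mul (Nat.cast_nonneg _)]; ring_nf
  have h2 : ((j:ℝ)/p) ^ ((j:ℝ)/p) * Real.exp (-((j:ℝ)/p)) ≤ Real.Gamma ((j : ℝ) / p + 1) :=
    aux_gamma_lb _ hy
  have key : (j:ℝ) ^ ((j:ℝ)/p) ≤ (p * Real.exp 1) ^ j * (((j:ℝ)/p) ^ ((j:ℝ)/p) * Real.exp (-((j:ℝ)/p))) := by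
    have hd : ((j:ℝ)/p) ^ ((j:ℝ)/p) = (j:ℝ) ^ ((j:ℝ)/p) * (p:ℝ) ^ (-((j:ℝ)/p)) := by
      rw [Real.div_rpow (Nat.cast_nonneg _) hp0.le, Real.rpow_neg hp0.le, div_eq_mul_inv]
    have hexp : Real.exp (-((j:ℝ)/p)) = (Real.exp 1) ^ (-((j:ℝ)/p)) := by
      rw [← Real.exp_one_rpow (-((j:ℝ)/p))]
    have hmul : (p:ℝ) ^ (-((j:ℝ)/p)) * (Real.exp 1) ^ (-((j:ℝ)/p)) = (p * Real.exp 1) ^ (-((j:ℝ)/p)) :=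
      (Real.mul_rpow hp0.le (Real.exp_pos 1).le).symm
    have hone : (1:ℝ) ≤ (p * Real.exp 1) ^ ((j:ℝ) - (j:ℝ)/p) := by
      apply Real.one_le_rpow hpe
      have : (j:ℝ)/p ≤ (j:ℝ) := by
        rw [div_le_iff₀ hp0]; nlinarith [Nat.cast_nonneg (α := ℝ) j]
      linarith
    have hsplit : ((p * Real.exp 1 : ℝ)) ^ (j:ℕ) * (p * Real.exp 1) ^ (-((j:ℝ)/p))
        = (p * Real.exp 1) ^ ((j:ℝ) - (j:ℝ)/p) := by
      rw [← Real.rpow_natCast (p * Real.exp 1) j, ← Real.rpow_add (by positivity)]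
      ring_nf
    calc (j:ℝ) ^ ((j:ℝ)/p) = (j:ℝ) ^ ((j:ℝ)/p) * 1 := (mul_one _).symm
      _ ≤ (j:ℝ) ^ ((j:ℝ)/p) * ((p * Real.exp 1) ^ ((j:ℝ) - (j:ℝ)/p)) :=
          mul_le_mul_of_nonneg_left hone (Real.rpow_nonneg (Nat.cast_nonneg _) _)
      _ = (p * Real.exp 1) ^ j * (((j:ℝ)/p) ^ ((j:ℝ)/p) * Real.exp (-((j:ℝ)/p))) := by
          rw [hd, hexp, ← hsplit, ← hmul]; ring
  calc ((j.factorial : ℝ)) ^ ((1:ℝ)/p) ≤ (j:ℝ) ^ ((j:ℝ)/p) := h1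
    _ ≤ (p * Real.exp 1) ^ j * (((j:ℝ)/p) ^ ((j:ℝ)/p) * Real.exp (-((j:ℝ)/p))) := key
    _ ≤ (p * Real.exp 1) ^ j * Real.Gamma ((j : ℝ) / p + 1) :=
        mul_le_mul_of_nonneg_left h2 (by positivity)

private lemma aux_pow_le_exp (p : ℝ) (hp : 1 ≤ p) (z : ℝ) (hz : 0 ≤ z) (k : ℕ) :
    z ^ k ≤ Real.exp (z ^ p / p) * ((k.factorial : ℝ)) ^ ((1:ℝ)/p) := by
  have hp0 : (0:ℝ) < p := lt_of_lt_of_le one_pos hp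
  set t : ℝ := z ^ p with ht_def
  have ht : 0 ≤ t := Real.rpow_nonneg hz p
  rcases Nat.eq_zero_or_pos k with hk | hk
  · subst hk
    simp only [pow_zero, Nat.factorial_zero, Nat.cast_one, Real.one_rpow, mul_one]
    exact Real.one_le_exp (by positivity)
  · have hK : (0:ℝ) < (k:ℝ) := by exact_mod_cast hk
    set K : ℝ := (k:ℝ)
    have hfact : K ^ K * Real.exp (-K) ≤ (k.factorial : ℝ) := by
      have := aux_gamma_lb K hK.le
      rwa [Real.Gamma_nat_eq_factorial] at this
    have hfact' : (K ^ K * Real.exp (-K)) ^ ((1:ℝ)/p) ≤ ((k.factorial : ℝ)) ^ ((1:ℝ)/p) :=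
      Real.rpow_le_rpow (by positivity) hfact (by positivity)
    have hfs : (K ^ K * Real.exp (-K)) ^ ((1:ℝ)/p) = K ^ (K/p) * Real.exp (-(K/p)) := by
      rw [Real.mul_rpow (by positivity) (Real.exp_pos _).le, ← Real.rpow_mul hK.le,
        ← Real.exp_one_rpow (-K), ← Real.rpow_mul (Real.exp_pos 1).le, Real.exp_one_rpow,
        show K * (1/p) = K/p by ring, show -K * (1/p) = -(K/p) by ring]
    have hzk : z ^ k = t ^ (K/p) := by
      rw [ht_def, ← Real.rpow_mul hz]
      rw [show p * (K/p) = K by field_simp]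
      rw [Real.rpow_natCast]
    have hstep : t ^ (K/p) ≤ Real.exp ((t-K)/p) * K ^ (K/p) := by
      have h1 : t / K ≤ Real.exp (t/K - 1) := by
        have := Real.add_one_le_exp (t/K - 1)
        linarith
      have h2 : (t/K) ^ (K/p) ≤ (Real.exp (t/K - 1)) ^ (K/p) :=
        Real.rpow_le_rpow (by positivity) h1 (by positivity)
      have h3 : (Real.exp (t/K - 1)) ^ (K/p) = Real.exp ((t-K)/p) := by
        rw [← Real.exp_one_rpow (t/K-1), ← Real.rpow_mul (Real.exp_pos 1).le,
          Real.exp_one_rpow]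
        congr 1
        field_simp
      have h4 : t ^ (K/p) = (t/K) ^ (K/p) * K ^ (K/p) := by
        rw [← Real.mul_rpow (by positivity) hK.le]
        congr 1
        field_simp
      rw [h4, ← h3]
      exact mul_le_mul_of_nonneg_right h2 (Real.rpow_nonneg hK.le _)
    calc z ^ k = t ^ (K/p) := hzk
      _ ≤ Real.exp ((t-K)/p) * K ^ (K/p) := hstep
      _ = Real.exp (t/p) * (K ^ (K/p) * Real.exp (-(K/p))) := by
          rw [show (t-K)/p = t/p + (-(K/p)) by ring, Real.exp_add]; ring
      _ ≤ Real.exp (t/p) * ((k.factorial : ℝ)) ^ ((1:ℝ)/p) := by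
          refine mul_le_mul_of_nonneg_left ?_ (Real.exp_pos _).le
          rw [← hfs]; exact hfact'

private lemma aux_fact_add (m k : ℕ) :
    (((m+k).factorial : ℝ)) ≤ 2^(m+k) * (m.factorial : ℝ) * (k.factorial : ℝ) := by
  have h : ((m+k).factorial) ≤ 2^(m+k) * m.factorial * k.factorial := by
    have hc : (m+k).choose k ≤ 2^(m+k) := by
      calc (m+k).choose k ≤ ∑ i ∈ Finset.range (m+k+1), (m+k).choose i :=
            Finset.single_le_sum (fun i _ => Nat.zero_le _) (Finset.mem_range.mpr (by omega))
        _ = 2^(m+k) := Nat.sum_range_choose _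
    have heq := Nat.choose_mul_factorial_mul_factorial (Nat.le_add_left k m)
    rw [show m + k - k = m by omega] at heq
    calc (m+k).factorial = (m+k).choose k * k.factorial * m.factorial := heq.symm
      _ ≤ 2^(m+k) * k.factorial * m.factorial := by
          exact Nat.mul_le_mul_right _ (Nat.mul_le_mul_right _ hc)
      _ = 2^(m+k) * m.factorial * k.factorial := by ring
  exact_mod_cast h

private lemma aux_term_bound (p q b C_f ε x : ℝ) (hp : 1 ≤ p) (hpq : 1/p + 1/q = 1)
    (hb : 0 < b) (hCf : 0 < C_f) (hε : 0 < ε) (hx : 0 ≤ x) (α : ℕ → ℝ)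
    (hα : ∀ j : ℕ, |α j| ≤ C_f * b ^ j / Real.Gamma ((j : ℝ) / p + 1)) (m k : ℕ) :
    (ε ^ m / (m.factorial : ℝ) ^ ((1:ℝ)/q)) * |α (m + k)| *
      (((k+m).factorial : ℝ) / (k.factorial : ℝ)) * x ^ k
    ≤ (C_f * Real.exp ((2*(2*(p*Real.exp 1)*b))^p / p * x ^ p)) *
        ((2*(p*Real.exp 1)*b*ε) ^ m * (1/2 : ℝ) ^ k) := by
  have hp0 : (0:ℝ) < p := lt_of_lt_of_le one_pos hp
  have hE1 : (1:ℝ) ≤ p * Real.exp 1 := by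
    nlinarith [Real.add_one_le_exp (1:ℝ), Real.exp_pos (1:ℝ)]
  set E : ℝ := p * Real.exp 1 with hE_def
  have hE0 : (0:ℝ) < E := lt_of_lt_of_le one_pos hE1
  set β : ℝ := b * E with hβ_def
  have hβ0 : (0:ℝ) < β := mul_pos hb hE0
  set D : ℝ := 2*(2*E*b) with hD_def
  have hD0 : (0:ℝ) < D := by positivity
  have hq0 : (0:ℝ) ≤ 1/q := by
    have h1p : 1/p ≤ 1 := by rw [div_le_one hp0]; exact hp
    linarith
  have hq1 : (1:ℝ)/q ≤ 1 := by
    have h0p : (0:ℝ) ≤ 1/p := by positivity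
    linarith
  set j := m + k with hj_def
  rw [show k + m = j by omega]
  set Fm : ℝ := (m.factorial : ℝ) with hFm_def
  set Fk : ℝ := (k.factorial : ℝ) with hFk_def
  set Fj : ℝ := (j.factorial : ℝ) with hFj_def
  have hFm0 : (0:ℝ) < Fm := by rw [hFm_def]; exact_mod_cast m.factorial_pos
  have hFk0 : (0:ℝ) < Fk := by rw [hFk_def]; exact_mod_cast k.factorial_pos
  have hFj0 : (0:ℝ) < Fj := by rw [hFj_def]; exact_mod_cast j.factorial_pos
  set Mq : ℝ := Fm ^ ((1:ℝ)/q) with hMq_def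
  set Kq : ℝ := Fk ^ ((1:ℝ)/q) with hKq_def
  set Kp : ℝ := Fk ^ ((1:ℝ)/p) with hKp_def
  set Jq : ℝ := Fj ^ ((1:ℝ)/q) with hJq_def
  set Jp : ℝ := Fj ^ ((1:ℝ)/p) with hJp_def
  have hMq0 : (0:ℝ) < Mq := Real.rpow_pos_of_pos hFm0 _
  have hKq0 : (0:ℝ) < Kq := Real.rpow_pos_of_pos hFk0 _
  have hKp0 : (0:ℝ) < Kp := Real.rpow_pos_of_pos hFk0 _
  have hJq0 : (0:ℝ) < Jq := Real.rpow_pos_of_pos hFj0 _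
  have hJp0 : (0:ℝ) < Jp := Real.rpow_pos_of_pos hFj0 _
  have hFj_eq : Fj = Jp * Jq := by
    rw [hJp_def, hJq_def, ← Real.rpow_add hFj0, hpq, Real.rpow_one]
  have hFk_eq : Fk = Kp * Kq := by
    rw [hKp_def, hKq_def, ← Real.rpow_add hFk0, hpq, Real.rpow_one]
  have hΓ : (0:ℝ) < Real.Gamma ((j:ℝ)/p + 1) := Real.Gamma_pos_of_pos (by positivity)
  -- step 1 : bound |α j|
  have halpha : |α j| ≤ C_f * β ^ j / Jp := by
    refine le_trans (hα j) ?_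
    rw [div_le_div_iff₀ hΓ hJp0]
    have h2 := aux_fact_le_gamma p hp j
    calc C_f * b ^ j * Jp ≤ C_f * b ^ j * (E ^ j * Real.Gamma ((j:ℝ)/p+1)) :=
          mul_le_mul_of_nonneg_left h2 (by positivity)
      _ = C_f * β ^ j * Real.Gamma ((j:ℝ)/p+1) := by rw [hβ_def, mul_pow]; ring
  -- step 3 component : Jq ≤ 2^j * Mq * Kq
  have hJq_le : Jq ≤ 2^j * Mq * Kq := by
    have hfa : Fj ≤ 2^j * Fm * Fk := aux_fact_add m k
    calc Jq ≤ (2^j * Fm * Fk) ^ ((1:ℝ)/q) := Real.rpow_le_rpow hFj0.le hfa hq0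
      _ = ((2:ℝ)^j) ^ ((1:ℝ)/q) * Mq * Kq := by
          rw [Real.mul_rpow (by positivity) hFk0.le, Real.mul_rpow (by positivity) hFm0.le]
      _ ≤ 2^j * Mq * Kq := by
          have h2 : ((2:ℝ)^j) ^ ((1:ℝ)/q) ≤ 2^j := by
            rw [← Real.rpow_natCast 2 j, ← Real.rpow_mul (by norm_num)]
            apply Real.rpow_le_rpow_of_exponent_le one_le_two
            calc (j:ℝ)*(1/q) ≤ (j:ℝ)*1 := mul_le_mul_of_nonneg_left hq1 (Nat.cast_nonneg _)
              _ = (j:ℝ) := mul_one _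
          exact mul_le_mul_of_nonneg_right (mul_le_mul_of_nonneg_right h2 hMq0.le) hKq0.le
  -- step 5 : exponential bound
  have h5 : (2*β*x)^k / Kp ≤ Real.exp (D^p/p * x^p) * (1/2:ℝ)^k := by
    rw [div_le_iff₀ hKp0]
    have hz := aux_pow_le_exp p hp (D*x) (by positivity) k
    have hzp : (D*x)^p = D^p * x^p := Real.mul_rpow hD0.le hx
    rw [hzp] at hz
    have h2b : (2*β*x) = (D*x)*(1/2:ℝ) := by rw [hD_def, hβ_def]; ring
    calc (2*β*x)^k = (D*x)^k * (1/2:ℝ)^k := by rw [h2b, mul_pow]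
      _ ≤ (Real.exp (D^p*x^p/p) * Kp) * (1/2:ℝ)^k :=
          mul_le_mul_of_nonneg_right hz (by positivity)
      _ = Real.exp (D^p/p*x^p) * (1/2:ℝ)^k * Kp := by
          rw [show D^p*x^p/p = D^p/p*x^p by ring]; ring
  -- main chain
  calc (ε ^ m / Mq) * |α j| * (Fj / Fk) * x ^ k
      ≤ (ε ^ m / Mq) * (C_f * β ^ j / Jp) * (Fj / Fk) * x ^ k := by
        refine mul_le_mul_of_nonneg_right (mul_le_mul_of_nonneg_right
          (mul_le_mul_of_nonneg_left halpha (by positivity)) (by positivity)) (pow_nonneg hx k)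
    _ = C_f * β ^ j * ε ^ m * x ^ k * (Jq / (Mq * Fk)) := by
        rw [hFj_eq]; field_simp
    _ ≤ C_f * β ^ j * ε ^ m * x ^ k * ((2^j * Mq * Kq) / (Mq * Fk)) := by
        refine mul_le_mul_of_nonneg_left ?_ (by positivity)
        exact div_le_div_of_nonneg_right hJq_le (by positivity) |>.trans_eq rfl
    _ = C_f * (2*β*ε) ^ m * ((2*β*x)^k / Kp) := by
        rw [hFk_eq, hj_def, pow_add, pow_add]
        field_simp [hMq0.ne', hKp0.ne', hKq0.ne']
        ring
    _ ≤ C_f * (2*β*ε) ^ m * (Real.exp (D^p/p * x^p) * (1/2:ℝ)^k) :=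
        mul_le_mul_of_nonneg_left h5 (by positivity)
    _ = (C_f * Real.exp (D^p / p * x ^ p)) * ((2*E*b*ε) ^ m * (1/2 : ℝ) ^ k) := by
        rw [show (2*β*ε) = 2*E*b*ε by rw [hβ_def]; ring]; ring

/-- Scalar core estimate in the proof of Theorem 3.2: for coefficients satisfying
`|α_{m+k}| ≤ C_f b^{m+k}/Γ((m+k)/p + 1)`, the double series
`∑_{m,k} (ε^m/(m!)^{1/q}) |α_{m+k}| ((k+m)!/k!) x^k` converges for small `ε` and is
bounded by `C exp(B'' x^p)`. -/
theorem double_series_estimate (p q b C_f : ℝ) (hp : 1 ≤ p) (hpq : 1 / p + 1 / q = 1)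
    (hb : 0 < b) (hCf : 0 < C_f) (α : ℕ → ℝ)
    (hα : ∀ j : ℕ, |α j| ≤ C_f * b ^ j / Real.Gamma ((j : ℝ) / p + 1)) :
    ∃ ε₀ > 0, ∀ ε : ℝ, 0 < ε → ε < ε₀ →
      ∃ C > 0, ∃ B'' > 0, ∀ x : ℝ, 0 ≤ x →
        Summable (fun mk : ℕ × ℕ =>
          (ε ^ mk.1 / (Nat.factorial mk.1 : ℝ) ^ ((1 : ℝ) / q)) * |α (mk.1 + mk.2)| *
            ((Nat.factorial (mk.2 + mk.1) : ℝ) / (Nat.factorial mk.2 : ℝ)) * x ^ mk.2) ∧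
        (∑' mk : ℕ × ℕ,
          (ε ^ mk.1 / (Nat.factorial mk.1 : ℝ) ^ ((1 : ℝ) / q)) * |α (mk.1 + mk.2)| *
            ((Nat.factorial (mk.2 + mk.1) : ℝ) / (Nat.factorial mk.2 : ℝ)) * x ^ mk.2)
          ≤ C * Real.exp (B'' * x ^ p) := by
  have hp0 : (0:ℝ) < p := lt_of_lt_of_le one_pos hp
  have hq0 : (0:ℝ) ≤ 1/q := by
    have h1p : 1/p ≤ 1 := by rw [div_le_one hp0]; exact hp
    linarith
  have hA : (0:ℝ) < 2*(p*Real.exp 1)*b := by positivity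
  refine ⟨1/(2*(p*Real.exp 1)*b), by positivity, fun ε hε hε' => ?_⟩
  set A : ℝ := 2*(p*Real.exp 1)*b with hA_def
  have hr1 : A*ε < 1 := by
    have := (lt_div_iff₀ hA).mp hε'
    linarith [mul_comm A ε]
  have hr0 : (0:ℝ) < A*ε := by positivity
  have hB0 : (0:ℝ) < (2*A)^p/p :=
    div_pos (Real.rpow_pos_of_pos (by positivity) p) hp0
  refine ⟨2*C_f/(1-A*ε), div_pos (by positivity) (by linarith), (2*A)^p/p, hB0, fun x hx => ?_⟩
  set B'' : ℝ := (2*A)^p/p with hB_def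
  set T : ℕ × ℕ → ℝ := fun mk =>
    (ε ^ mk.1 / (Nat.factorial mk.1 : ℝ) ^ ((1 : ℝ) / q)) * |α (mk.1 + mk.2)| *
      ((Nat.factorial (mk.2 + mk.1) : ℝ) / (Nat.factorial mk.2 : ℝ)) * x ^ mk.2 with hT_def
  set g : ℕ × ℕ → ℝ := fun mk =>
    (C_f * Real.exp (B'' * x ^ p)) * ((A*ε) ^ mk.1 * (1/2 : ℝ) ^ mk.2) with hg_def
  have hle : ∀ mk, T mk ≤ g mk := by
    intro mk
    have h := aux_term_bound p q b C_f ε x hp hpq hb hCf hε hx α hα mk.1 mk.2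
    have hBe : (2*(2*(p*Real.exp 1)*b))^p / p * x ^ p = B'' * x ^ p := by
      rw [hB_def, hA_def]
    simpa [hT_def, hg_def, hA_def, hBe] using h
  have hT0 : ∀ mk, 0 ≤ T mk := by
    intro mk
    rw [hT_def]
    have h1 : (0:ℝ) ≤ ε ^ mk.1 / (Nat.factorial mk.1 : ℝ) ^ ((1 : ℝ) / q) := by positivity
    have h2 : (0:ℝ) ≤ (Nat.factorial (mk.2 + mk.1) : ℝ) / (Nat.factorial mk.2 : ℝ) := by
      positivity
    exact mul_nonneg (mul_nonneg (mul_nonneg h1 (abs_nonneg _)) h2) (pow_nonneg hx _)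
  have hsum1 : Summable (fun m : ℕ => (A*ε)^m) := summable_geometric_of_lt_one hr0.le hr1
  have hsum2 : Summable (fun k : ℕ => (1/2:ℝ)^k) :=
    summable_geometric_of_lt_one (by norm_num) (by norm_num)
  have hn1 : Summable (fun m : ℕ => ‖(A*ε)^m‖) := by
    simpa [Real.norm_eq_abs, abs_of_nonneg (pow_nonneg hr0.le _)] using hsum1
  have hn2 : Summable (fun k : ℕ => ‖(1/2:ℝ)^k‖) := by
    simpa [Real.norm_eq_abs, abs_of_nonneg (pow_nonneg (by norm_num : (0:ℝ) ≤ 1/2) _)]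
      using hsum2
  have hprod : Summable (fun mk : ℕ × ℕ => (A*ε)^mk.1 * (1/2:ℝ)^mk.2) :=
    summable_mul_of_summable_norm hn1 hn2
  have hgs : Summable g := by
    rw [hg_def]
    exact hprod.mul_left _
  have hTs : Summable T := Summable.of_nonneg_of_le hT0 hle hgs
  refine ⟨hTs, ?_⟩
  have hts : ∑' mk, T mk ≤ ∑' mk, g mk := Summable.tsum_le_tsum hle hTs hgs
  have hgt : ∑' mk, g mk = (2*C_f/(1-A*ε)) * Real.exp (B'' * x ^ p) := by
    rw [hg_def, tsum_mul_left]
    have hpt : ∑' mk : ℕ × ℕ, (A*ε)^mk.1 * (1/2:ℝ)^mk.2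
        = (∑' m : ℕ, (A*ε)^m) * (∑' k : ℕ, (1/2:ℝ)^k) :=
      (tsum_mul_tsum_of_summable_norm hn1 hn2).symm
    rw [hpt, tsum_geometric_of_lt_one hr0.le hr1,
      tsum_geometric_of_lt_one (by norm_num) (by norm_num)]
    have h12 : (1 - (1/2:ℝ))⁻¹ = 2 := by norm_num
    rw [h12]
    field_simp
  calc ∑' mk, T mk ≤ ∑' mk, g mk := hts
    _ = (2*C_f/(1-A*ε)) * Real.exp (B'' * x ^ p) := hgt
end

section
/- Let p ≥ 1 and let f(z) = ∑_k a_k z^k be entire with |f(z)| ≤ C_f e^{B|z|^p}. For any z ≠ 0 and τ > 0, the Cauchy estimate gives |f^{(k)}(z)| ≤ C_f · k!/(τ|z|)^k · exp(B(1+τ)^p |z|^p); consequently, optimizing over τ, |f^{(k)}(z)| ≤ C_f · k! · b^k · k^{-k/p} · exp(B·2^p|z|^p) with b = (2^p B p e)^{1/p}. -/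
/-!
Cauchy's estimate on the circle of radius `R` around `z` bounds `‖f⁽ᵏ⁾ z‖` by
`k! C_f exp (B (‖z‖ + R) ^ p) / R ^ k`; with `R = τ ‖z‖` this is the first bound. Since
`(‖z‖ + R) ^ p ≤ 2 ^ p (‖z‖ ^ p + R ^ p)`, it remains to minimise `exp (B 2 ^ p R ^ p) / R ^ k`,
which happens at `R ^ p = k / (2 ^ p B p)` and gives `b ^ k k ^ (-k / p)`.
-/

open Real Metric

theorem Real.add_rpow_le_two_rpow_mul_rpow_add_rpow {a b p : ℝ} (ha : 0 ≤ a) (hb : 0 ≤ b)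
    (hp : 0 ≤ p) : (a + b) ^ p ≤ 2 ^ p * (a ^ p + b ^ p) := by
  have hmax : max a b ^ p ≤ a ^ p + b ^ p := by
    rcases le_total a b with h | h
    · rw [max_eq_right h]; linarith [rpow_nonneg ha p]
    · rw [max_eq_left h]; linarith [rpow_nonneg hb p]
  calc (a + b) ^ p ≤ (2 * max a b) ^ p := by
        gcongr; linarith [le_max_left a b, le_max_right a b]
    _ = 2 ^ p * max a b ^ p := mul_rpow zero_le_two (ha.trans (le_max_left a b))
    _ ≤ 2 ^ p * (a ^ p + b ^ p) := by gcongr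

theorem norm_iteratedDeriv_le_of_norm_le_mul_exp_rpow {E : Type*} [NormedAddCommGroup E]
    [NormedSpace ℂ E] [CompleteSpace E] {f : ℂ → E} (hf : Differentiable ℂ f) {B C p : ℝ}
    (hB : 0 ≤ B) (hC : 0 ≤ C) (hp : 0 ≤ p) (hgrowth : ∀ w, ‖f w‖ ≤ C * exp (B * ‖w‖ ^ p))
    (z : ℂ) {R : ℝ} (hR : 0 < R) (k : ℕ) :
    ‖iteratedDeriv k f z‖ ≤ k.factorial * (C * exp (B * (‖z‖ + R) ^ p)) / R ^ k := by
  refine Complex.norm_iteratedDeriv_le_of_forall_mem_sphere_norm_le k hR hf.diffContOnCl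
    fun w hw => ?_
  have hw : ‖w‖ ≤ ‖z‖ + R := by
    simpa [mem_sphere_iff_norm.1 hw] using norm_le_norm_add_norm_sub' w z
  calc ‖f w‖ ≤ C * exp (B * ‖w‖ ^ p) := hgrowth w
    _ ≤ C * exp (B * (‖z‖ + R) ^ p) := by gcongr

theorem exists_pos_exp_rpow_div_pow_le {B p r : ℝ} (hB : 0 < B) (hp : 0 < p) (hr : 0 < r)
    (k : ℕ) :
    ∃ R > 0, exp (B * (r + R) ^ p) / R ^ k ≤
      ((2 ^ p * B * p * exp 1) ^ (1 / p)) ^ k * (k : ℝ) ^ (-(k / p)) * exp (B * 2 ^ p * r ^ p) := by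
  rcases Nat.eq_zero_or_pos k with rfl | hk
  · refine ⟨r, hr, ?_⟩
    rw [← two_mul, mul_rpow zero_le_two hr.le]
    simp [mul_assoc]
  have hbp : ((2 ^ p * B * p * exp 1) ^ (1 / p)) ^ p = 2 ^ p * B * p * exp 1 := by
    rw [one_div]; exact rpow_inv_rpow (by positivity) hp.ne'
  set b := (2 ^ p * B * p * exp 1) ^ (1 / p)
  have hk : (0 : ℝ) < k := by exact_mod_cast hk
  set R := (k / (2 ^ p * B * p)) ^ p⁻¹
  have hR : 0 < R := by positivity
  have hRp : R ^ p = k / (2 ^ p * B * p) := rpow_inv_rpow (by positivity) hp.ne'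
  have hexponent : B * (r + R) ^ p ≤ B * 2 ^ p * r ^ p + k / p := by
    calc B * (r + R) ^ p ≤ B * (2 ^ p * (r ^ p + R ^ p)) := by
          gcongr; exact add_rpow_le_two_rpow_mul_rpow_add_rpow hr.le hR.le hp.le
      _ = B * 2 ^ p * r ^ p + k / p := by rw [hRp]; field_simp
  have hbRp : (b * R) ^ p = exp 1 * k := by
    rw [mul_rpow (by positivity) hR.le, hbp, hRp]
    field_simp
  have hbRk : (b * R) ^ k * (k : ℝ) ^ (-(k / p)) = exp (k / p) := by
    rw [← rpow_natCast, ← mul_div_cancel₀ (k : ℝ) hp.ne', rpow_mul (by positivity), hbRp,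
      mul_div_cancel₀ (k : ℝ) hp.ne', mul_rpow (exp_pos 1).le hk.le, exp_one_rpow, mul_assoc,
      ← rpow_add hk, add_neg_cancel, rpow_zero, mul_one]
  refine ⟨R, hR, ?_⟩
  calc exp (B * (r + R) ^ p) / R ^ k ≤ exp (B * 2 ^ p * r ^ p) * exp (k / p) / R ^ k := by
        rw [← exp_add]; gcongr
    _ = b ^ k * (k : ℝ) ^ (-(k / p)) * exp (B * 2 ^ p * r ^ p) := by
        rw [← hbRk, mul_pow]; field_simp

theorem cauchy_derivative_estimate_general (p B C_f : ℝ) (hp : 1 ≤ p) (hB : 0 < B)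
    (f : ℂ → ℂ) (hf : Differentiable ℂ f)
    (hgrowth : ∀ z : ℂ, ‖f z‖ ≤ C_f * Real.exp (B * ‖z‖ ^ p)) :
    (∀ z : ℂ, z ≠ 0 → ∀ τ : ℝ, 0 < τ → ∀ k : ℕ,
      ‖iteratedDeriv k f z‖ ≤
        C_f * (Nat.factorial k : ℝ) / (τ * ‖z‖) ^ k *
          Real.exp (B * (1 + τ) ^ p * ‖z‖ ^ p)) ∧
    (∀ z : ℂ, z ≠ 0 → ∀ k : ℕ,
      ‖iteratedDeriv k f z‖ ≤
        C_f * (Nat.factorial k : ℝ) * ((2 ^ p * B * p * Real.exp 1) ^ ((1 : ℝ) / p)) ^ k *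
          (k : ℝ) ^ (-((k : ℝ) / p)) * Real.exp (B * 2 ^ p * ‖z‖ ^ p)) := by
  have hC : 0 ≤ C_f := nonneg_of_mul_nonneg_left ((norm_nonneg _).trans (hgrowth 0)) (exp_pos _)
  have hcauchy := norm_iteratedDeriv_le_of_norm_le_mul_exp_rpow hf hB.le hC (by linarith) hgrowth
  refine ⟨fun z hz τ hτ k => ?_, fun z hz k => ?_⟩
  · calc ‖iteratedDeriv k f z‖
        ≤ k.factorial * (C_f * exp (B * (‖z‖ + τ * ‖z‖) ^ p)) / (τ * ‖z‖) ^ k :=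
          hcauchy z (by positivity) k
      _ = C_f * k.factorial / (τ * ‖z‖) ^ k * exp (B * (1 + τ) ^ p * ‖z‖ ^ p) := by
          rw [← one_add_mul, mul_rpow (by positivity) (norm_nonneg z), ← mul_assoc B]; ring
  · obtain ⟨R, hR, hopt⟩ :=
      exists_pos_exp_rpow_div_pow_le hB (p := p) (by linarith) (norm_pos_iff.2 hz) k
    calc ‖iteratedDeriv k f z‖
        ≤ k.factorial * (C_f * exp (B * (‖z‖ + R) ^ p)) / R ^ k := hcauchy z hR k
      _ = C_f * k.factorial * (exp (B * (‖z‖ + R) ^ p) / R ^ k) := by ring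
      _ ≤ C_f * k.factorial * _ := mul_le_mul_of_nonneg_left hopt (by positivity)
      _ = _ := by ring

/-- Cauchy derivative estimates for an entire function with `|f(z)| ≤ C_f e^{B|z|^p}`:
first the bound on circles of radius `τ|z|`, then the optimized bound with
`b = (2^p B p e)^{1/p}`. -/
theorem cauchy_derivative_estimate (p B C_f : ℝ) (hp : 1 ≤ p) (hB : 0 < B) (hCf : 0 < C_f)
    (f : ℂ → ℂ) (hf : Differentiable ℂ f)
    (hgrowth : ∀ z : ℂ, ‖f z‖ ≤ C_f * Real.exp (B * ‖z‖ ^ p)) :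
    (∀ z : ℂ, z ≠ 0 → ∀ τ : ℝ, 0 < τ → ∀ k : ℕ,
      ‖iteratedDeriv k f z‖ ≤
        C_f * (Nat.factorial k : ℝ) / (τ * ‖z‖) ^ k *
          Real.exp (B * (1 + τ) ^ p * ‖z‖ ^ p)) ∧
    (∀ z : ℂ, z ≠ 0 → ∀ k : ℕ,
      ‖iteratedDeriv k f z‖ ≤
        C_f * (Nat.factorial k : ℝ) * ((2 ^ p * B * p * Real.exp 1) ^ ((1 : ℝ) / p)) ^ k *
          (k : ℝ) ^ (-((k : ℝ) / p)) * Real.exp (B * 2 ^ p * ‖z‖ ^ p)) :=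
  cauchy_derivative_estimate_general p B C_f hp hB f hf hgrowth
end
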